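/- arXiv:0805.2671 — 2 statements merged into one kernel-verified Lean document; each statement's English description precedes it below -/
import Mathlib

section
/- The total number of leaves of a BDT of height h is t(h) = 2^(2^(h-1)) for h ≥ 1; consequently, a BDT storing n ≥ 2 elements at its leaves has height h = O(log log n), specifically h ≤ ⌈log₂ log₂ n⌉ + 1. -/
/-! From level 1 on, `d = t` turns the recurrence `t (i+1) = t i * d i` into repeated squaring
starting at `t 1 = t 0 * d 0 = 2`, so `t h = 2 ^ 2 ^ (h - 1)`. Taking
`h = ⌈log₂ ⌈log₂ n⌉⌉ + 1` then gives `n ≤ 2 ^ ⌈log₂ n⌉ ≤ 2 ^ 2 ^ ⌈log₂ ⌈log₂ n⌉⌉ = t h`. -/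

theorem eq_pow_two_pow_of_succ_eq_sq {M : Type*} [Monoid M] {t : ℕ → M} {a : M}
    (h1 : t 1 = a) (hsq : ∀ k, 1 ≤ k → t (k + 1) = t k ^ 2) :
    ∀ h, 1 ≤ h → t h = a ^ 2 ^ (h - 1) := by
  intro h hh
  induction h, hh using Nat.le_induction with
  | base => simp [h1]
  | succ k hk ih =>
    rw [hsq k hk, ih, ← pow_mul, ← pow_succ, Nat.sub_add_cancel hk, Nat.add_sub_cancel]

theorem le_two_pow_two_pow_clog_clog (n : ℕ) : n ≤ 2 ^ 2 ^ Nat.clog 2 (Nat.clog 2 n) :=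
  calc n ≤ 2 ^ Nat.clog 2 n := Nat.le_pow_clog one_lt_two n
    _ ≤ 2 ^ 2 ^ Nat.clog 2 (Nat.clog 2 n) :=
      Nat.pow_le_pow_right two_pos (Nat.le_pow_clog one_lt_two _)

/-- The number of leaves of a BDT of height h is t(h) = 2^(2^(h-1)) for h ≥ 1;
consequently a BDT storing n ≥ 2 elements has height h ≤ ⌈log₂ log₂ n⌉ + 1,
i.e. h = O(log log n). -/
theorem bdt_height_loglog (d t : ℕ → ℕ)
    (hd0 : d 0 = 2) (ht0 : t 0 = 1)
    (ht : ∀ i, 1 ≤ i → t i = t (i - 1) * d (i - 1))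
    (hd : ∀ i, 1 ≤ i → d i = t i) :
    (∀ h, 1 ≤ h → t h = 2 ^ (2 ^ (h - 1))) ∧
    ∀ n, 2 ≤ n → ∃ h, 1 ≤ h ∧ n ≤ t h ∧ h ≤ Nat.clog 2 (Nat.clog 2 n) + 1 := by
  have ht1 : t 1 = 2 := by simp [ht 1 le_rfl, ht0, hd0]
  have hsq : ∀ k, 1 ≤ k → t (k + 1) = t k ^ 2 := fun k hk => by
    simpa [hd k hk, sq] using ht (k + 1) (Nat.le_add_left 1 k)
  have leaves := eq_pow_two_pow_of_succ_eq_sq ht1 hsq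
  refine ⟨leaves, fun n _ => ⟨Nat.clog 2 (Nat.clog 2 n) + 1, Nat.le_add_left 1 _, ?_, le_rfl⟩⟩
  simpa [leaves _ (Nat.le_add_left 1 _)] using le_two_pow_two_pow_clog_clog n
end

section
/- Expected-time composition: if a finger search performs a climb phase of r = O(log log d) steps where step i costs O(√(log d_i/log log d_i)) with d_i = 2^(2^i) and d_r ≤ d < d_{r+1}, plus a descent in a Beame–Fich structure over d elements costing O(√(log d/log log d)), then the total cost is O(√(log d/log log d)). -/
/-!
From `i = 2` on, the climb terms `√(2^i/i)` grow geometrically (by a factor at least `√(4/3)`),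
so the climb costs `O(√(2^r/r))`. Since `2^r ≤ log₂ d < 2^(r+1)`, also `log₂ log₂ d ≤ r + 1 ≤ 2r`,
hence `2^r/r ≤ 2 log₂ d / log₂ log₂ d` and the climb is dominated by the descent cost.
-/

open Finset Real

theorem sub_one_mul_sum_Icc_le_of_mul_le_succ {a : ℕ → ℝ} {c : ℝ} {m r : ℕ} (hmr : m ≤ r)
    (ha : 0 ≤ a m) (hc : ∀ i, m ≤ i → i < r → c * a i ≤ a (i + 1)) :
    (c - 1) * ∑ i ∈ Icc m r, a i ≤ c * a r := by
  induction r, hmr using Nat.le_induction with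
  | base => simp only [Icc_self, sum_singleton]; linarith
  | succ r hmr ih =>
    rw [sum_Icc_succ_top (by omega)]
    have := ih fun i hmi hir => hc i hmi (by omega)
    linarith [hc r hmr (by omega)]

theorem mul_sqrt_two_pow_div_le_succ {i : ℕ} (hi : 2 ≤ i) :
    11 / 10 * √((2 : ℝ) ^ i / i) ≤ √((2 : ℝ) ^ (i + 1) / (i + 1 : ℕ)) := by
  have hi' : (2 : ℝ) ≤ i := by exact_mod_cast hi
  rw [le_sqrt (by positivity) (by positivity), mul_pow, sq_sqrt (by positivity), ← mul_div_assoc,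
    div_le_div_iff₀ (by positivity) (by positivity), pow_succ (2 : ℝ) i]
  push_cast
  nlinarith [mul_nonneg (by positivity : (0 : ℝ) ≤ 2 ^ i) (by linarith : (0 : ℝ) ≤ 79 * i - 121)]

theorem sum_Icc_sqrt_two_pow_div_le {r : ℕ} (hr : 2 ≤ r) :
    ∑ i ∈ Icc 1 r, √((2 : ℝ) ^ i / i) ≤ 12 * √((2 : ℝ) ^ r / r) := by
  have htail :
      (11 / 10 - 1) * ∑ i ∈ Icc 2 r, √((2 : ℝ) ^ i / i) ≤ 11 / 10 * √((2 : ℝ) ^ r / r) :=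
    sub_one_mul_sum_Icc_le_of_mul_le_succ hr (sqrt_nonneg _)
      fun i hi _ => mul_sqrt_two_pow_div_le_succ hi
  have hfirst : √((2 : ℝ) ^ 1 / (1 : ℕ)) ≤ √((2 : ℝ) ^ r / r) := by
    apply sqrt_le_sqrt
    rw [le_div_iff₀ (by positivity)]
    have htwo_mul : 2 * r ≤ 2 ^ r := by
      obtain ⟨k, rfl⟩ := Nat.exists_eq_add_of_le' (by omega : 1 ≤ r)
      rw [pow_succ]
      linarith [@Nat.lt_two_pow_self k]
    norm_num
    exact_mod_cast htwo_mul
  rw [← insert_Icc_add_one_left_eq_Icc (by omega : 1 ≤ r), sum_insert (by simp)]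
  linarith

theorem logb_natCast_lt_natLog_add_one (b n : ℕ) : logb b n < Nat.log b n + 1 := by
  simpa [natFloor_logb_natCast] using Nat.lt_floor_add_one (logb b n)

theorem two_pow_log_log_le_logb {d : ℕ} (hd : 2 ≤ d) :
    (2 : ℝ) ^ Nat.log 2 (Nat.log 2 d) ≤ logb 2 d := by
  have hn : Nat.log 2 d ≠ 0 := (Nat.log_pos one_lt_two hd).ne'
  calc (2 : ℝ) ^ Nat.log 2 (Nat.log 2 d) ≤ Nat.log 2 d := by
        exact_mod_cast Nat.pow_log_le_self 2 hn
    _ ≤ logb 2 d := by exact_mod_cast natLog_le_logb d 2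

theorem logb_lt_two_pow_log_log_succ (d : ℕ) :
    logb 2 d < (2 : ℝ) ^ (Nat.log 2 (Nat.log 2 d) + 1) := by
  calc logb 2 d < Nat.log 2 d + 1 := by exact_mod_cast logb_natCast_lt_natLog_add_one 2 d
    _ ≤ (2 : ℝ) ^ (Nat.log 2 (Nat.log 2 d) + 1) := by
        exact_mod_cast Nat.lt_pow_succ_log_self one_lt_two _

theorem two_pow_div_le_two_mul_div_logb {r : ℕ} {L : ℝ} (hr : 1 ≤ r) (hlo : 2 ^ r ≤ L)
    (hhi : L ≤ 2 ^ (r + 1)) : (2 : ℝ) ^ r / r ≤ 2 * (L / logb 2 L) := by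
  have hr' : (1 : ℝ) ≤ r := by exact_mod_cast hr
  have hL : 0 < L := lt_of_lt_of_le (by positivity) hlo
  have hlogb_pow (k : ℕ) : logb 2 ((2 : ℝ) ^ k) = k := by simp [logb_pow]
  have hℓlo : (r : ℝ) ≤ logb 2 L :=
    hlogb_pow r ▸ logb_le_logb_of_le one_lt_two (by positivity) hlo
  have hℓhi : logb 2 L ≤ r + 1 := by
    have := hlogb_pow (r + 1) ▸ logb_le_logb_of_le one_lt_two (by positivity) hhi
    exact_mod_cast this
  rw [← mul_div_assoc, div_le_div_iff₀ (by positivity) (by linarith)]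
  nlinarith [pow_pos (two_pos : (0 : ℝ) < 2) r]

/-- Expected-time composition for finger search: for d ≥ 16 and
r = ⌊log₂ log₂ d⌋, the climb cost ∑_{i=1}^{r} √(2^i/i) (step i costing
√(log d_i/log log d_i) with d_i = 2^(2^i)) plus the final Beame–Fich descent
cost √(log d/log log d) is at most C·√(log d/log log d) for an absolute
constant C. -/
theorem finger_search_total_cost :
    ∃ C : ℝ, 0 < C ∧ ∀ d : ℕ, 16 ≤ d →
      (∑ i ∈ Finset.Icc 1 (Nat.log 2 (Nat.log 2 d)),
          Real.sqrt ((2 : ℝ) ^ i / i)) +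
        Real.sqrt (Real.logb 2 d / Real.logb 2 (Real.logb 2 d)) ≤
      C * Real.sqrt (Real.logb 2 d / Real.logb 2 (Real.logb 2 d)) := by
  refine ⟨25, by norm_num, fun d hd => ?_⟩
  set r := Nat.log 2 (Nat.log 2 d)
  set x := logb 2 d / logb 2 (logb 2 d)
  have hr : 2 ≤ r := Nat.le_log_of_pow_le one_lt_two (Nat.le_log_of_pow_le one_lt_two hd)
  have hratio : (2 : ℝ) ^ r / r ≤ 2 * x := two_pow_div_le_two_mul_div_logb (by omega)
    (two_pow_log_log_le_logb (by omega)) (logb_lt_two_pow_log_log_succ d).le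
  have hlast : √((2 : ℝ) ^ r / r) ≤ 2 * √x :=
    calc √((2 : ℝ) ^ r / r) ≤ √(2 ^ 2 * x) :=
          sqrt_le_sqrt (by linarith [(by positivity : (0 : ℝ) ≤ 2 ^ r / r)])
      _ = 2 * √x := by rw [sqrt_mul (by norm_num), sqrt_sq (by norm_num)]
  calc ∑ i ∈ Icc 1 r, √((2 : ℝ) ^ i / i) + √x ≤ 12 * √((2 : ℝ) ^ r / r) + √x := by
        gcongr
        exact sum_Icc_sqrt_two_pow_div_le hr
    _ ≤ 25 * √x := by linarith
end
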